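/- arXiv:1807.10762 — 5 statements merged into one kernel-verified Lean document; each statement's English description precedes it below -/
import Mathlib

section
/- If x is a vertex of a tessellation with vertex pattern (f_1,...,f_N) (the face degrees of the faces incident to x, each f_i ≥ 3, N ≥ 3) and the combinatorial curvature Φ(x) = 1 - N/2 + Σ_{i=1}^N 1/f_i is negative, then Φ(x) ≤ -1/1806. -/
/-!
For `N ≥ 7` every degree is at least `3`, so `Φ ≤ 1 - N/2 + N/3 = 1 - N/6 ≤ -1/6`.
For `N ≤ 6` the claim is that a sum of `N` unit fractions below `N/2 - 1` falls short of it by at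
least `1/1806`, which is a finite search: once the smallest degree `a` of a `k`-tuple satisfies
`k/a ≤ r - δ` the whole sum is at most `r - δ`, so only finitely many smallest degrees need to be
examined, each followed by a search for the remaining `k - 1` degrees with target `r - 1/a`.
The extremal pattern is `(3, 7, 43)`, with `1/3 + 1/7 + 1/43 = 1/2 - 1/1806`.
-/

/-- Combinatorial curvature of a vertex pattern `(f 0, …, f (N-1))`. -/
noncomputable def Phi (N : ℕ) (f : Fin N → ℕ) : ℝ :=
  1 - (N : ℝ) / 2 + ∑ i, (1 : ℝ) / (f i)

/-- `unitFractionGapCheck δ k r lo` certifies that every nondecreasing `k`-tuple of naturals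
`≥ lo` whose reciprocals sum to less than `r` has reciprocal sum at most `r - δ`. -/
def unitFractionGapCheck (δ : ℚ) : ℕ → ℚ → ℕ → Bool
  | 0, r, _ => r ≤ 0 || δ ≤ r
  | k + 1, r, lo => r ≤ 0 || (δ < r &&
      (List.range' lo (⌈(k + 1 : ℚ) / (r - δ)⌉₊ - lo)).all
        fun a => unitFractionGapCheck δ k (r - 1 / a) a)

theorem sum_one_div_le_card_div {K : Type*} [Field K] [LinearOrder K] [IsStrictOrderedRing K]
    {n a : ℕ} (f : Fin n → ℕ) (ha : 0 < a) (hf : ∀ i, a ≤ f i) :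
    ∑ i, (1 : K) / f i ≤ n / a := by
  calc ∑ i, (1 : K) / f i ≤ ∑ _i : Fin n, (1 : K) / a :=
        Finset.sum_le_sum fun i _ =>
          one_div_le_one_div_of_le (by positivity) (by exact_mod_cast hf i)
    _ = n / a := by simp [div_eq_mul_inv]

theorem sum_one_div_le_sub_of_gapCheck {δ : ℚ} {k : ℕ} {r : ℚ} {lo : ℕ} (f : Fin k → ℕ)
    (hf : Monotone f) (hlo : ∀ i, lo ≤ f i) (hcheck : unitFractionGapCheck δ k r lo = true)
    (hlt : ∑ i, (1 : ℚ) / f i < r) : ∑ i, (1 : ℚ) / f i ≤ r - δ := by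
  induction k generalizing r lo with
  | zero =>
    simp only [unitFractionGapCheck, Bool.or_eq_true, decide_eq_true_eq] at hcheck
    simp only [Finset.univ_eq_empty, Finset.sum_empty] at hlt ⊢
    rcases hcheck with hr | hr <;> linarith
  | succ k ih =>
    have hsum_nonneg : 0 ≤ ∑ i, (1 : ℚ) / f i := Finset.sum_nonneg fun i _ => by positivity
    simp only [unitFractionGapCheck, Bool.or_eq_true, Bool.and_eq_true, decide_eq_true_eq,
      List.all_eq_true, List.mem_range'_1] at hcheck
    obtain hr | ⟨hδr, hsearched⟩ := hcheck
    · linarith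
    by_cases hf0 : f 0 < ⌈(k + 1 : ℚ) / (r - δ)⌉₊
    · have htail := ih (r := r - 1 / f 0) (fun i => f i.succ)
        (hf.comp Fin.strictMono_succ.monotone) (fun i => hf (Fin.zero_le _))
        (hsearched (f 0) ⟨hlo 0, by omega⟩)
      rw [Fin.sum_univ_succ] at hlt ⊢
      linarith [htail (by linarith)]
    · rw [not_lt] at hf0
      have hpos : 0 < (k + 1 : ℚ) / (r - δ) := div_pos (by positivity) (by linarith)
      have hbound : (k + 1 : ℚ) / (r - δ) ≤ f 0 := Nat.ceil_le.mp hf0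
      have hf0_pos : 0 < f 0 := (Nat.ceil_pos.mpr hpos).trans_le hf0
      calc ∑ i, (1 : ℚ) / f i ≤ (k + 1 : ℕ) / f 0 :=
            sum_one_div_le_card_div f hf0_pos fun i => hf (Fin.zero_le i)
        _ ≤ r - δ := by
          push_cast
          rw [div_le_iff₀ (by positivity)]
          rwa [div_le_iff₀ (by linarith), mul_comm] at hbound

theorem Phi_le_one_sub_div_six {N : ℕ} (f : Fin N → ℕ) (h3 : ∀ i, 3 ≤ f i) :
    Phi N f ≤ 1 - N / 6 := by
  have := sum_one_div_le_card_div (K := ℝ) f (by norm_num) h3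
  rw [Phi]
  push_cast at this
  linarith

theorem Phi_le_neg_of_gapCheck {δ : ℚ} {N lo : ℕ} (f : Fin N → ℕ) (hf : Monotone f)
    (hlo : ∀ i, lo ≤ f i) (hcheck : unitFractionGapCheck δ N (N / 2 - 1) lo = true)
    (hneg : Phi N f < 0) : Phi N f ≤ -δ := by
  set s : ℚ := ∑ i, (1 : ℚ) / f i with hs
  have hsum : ∑ i, (1 : ℝ) / f i = s := by rw [hs]; push_cast; rfl
  rw [Phi, hsum] at hneg ⊢
  have hlt : s < N / 2 - 1 := by
    have : (s : ℝ) < ((N / 2 - 1 : ℚ) : ℝ) := by push_cast; linarith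
    exact_mod_cast this
  have hle := (Rat.cast_le (K := ℝ)).mpr (sum_one_div_le_sub_of_gapCheck f hf hlo hcheck hlt)
  push_cast at hle
  linarith

theorem stmt0_general (N : ℕ) (f : Fin N → ℕ) (hmono : Monotone f)
    (h3 : ∀ i, 3 ≤ f i) (hneg : Phi N f < 0) :
    Phi N f ≤ -(1 / 1806) := by
  rcases lt_or_ge N 7 with hN7 | hN7
  · have hcheck : unitFractionGapCheck (1 / 1806) N (N / 2 - 1) 3 = true := by
      interval_cases N <;> decide +kernel
    have := Phi_le_neg_of_gapCheck f hmono h3 hcheck hneg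
    norm_num at this
    exact this
  · have := Phi_le_one_sub_div_six f h3
    have : (7 : ℝ) ≤ N := by exact_mod_cast hN7
    linarith

/-- Higuchi's bound: a vertex pattern with negative combinatorial curvature has
curvature at most `-1/1806`. -/
theorem stmt0 (N : ℕ) (hN : 3 ≤ N) (f : Fin N → ℕ) (hmono : Monotone f)
    (h3 : ∀ i, 3 ≤ f i) (hneg : Phi N f < 0) :
    Phi N f ≤ -(1 / 1806) :=
  stmt0_general N f hmono h3 hneg
end

section
/- For integers f_1 ≤ ... ≤ f_N with each f_i ≥ 3 and N ≥ 3, if Φ(f_1,...,f_N) = -1/1806 then N = 3 and (f_1,f_2,f_3) = (3,7,43). -/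
set_option maxHeartbeats 4000000

lemma div_bound (p q m x : ℕ) (hx : 0 < x) (hq : 0 < q)
    (h : (p:ℝ)/(q:ℝ) ≤ (m:ℝ)/(x:ℝ)) : p * x ≤ m * q := by
  rw [div_le_div_iff₀ (by exact_mod_cast hq) (by exact_mod_cast hx)] at h
  exact_mod_cast h

/-- Equality in Higuchi's bound holds exactly for the pattern `(3,7,43)`. -/
theorem stmt1 (N : ℕ) (hN : 3 ≤ N) (f : Fin N → ℕ) (hmono : Monotone f)
    (h3 : ∀ i, 3 ≤ f i) (heq : Phi N f = -(1 / 1806)) :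
    N = 3 ∧ ∀ i : Fin N,
      f i = if (i : ℕ) = 0 then 3 else if (i : ℕ) = 1 then 7 else 43 := by
  have hle : ∀ i, (1:ℝ)/(f i) ≤ 1/3 := fun i =>
    one_div_le_one_div_of_le (by norm_num) (by exact_mod_cast h3 i)
  have hN6 : N ≤ 6 := by
    have hsum_le : ∑ i, (1:ℝ)/(f i) ≤ (N:ℝ)/3 := by
      calc ∑ i, (1:ℝ)/(f i) ≤ ∑ _i : Fin N, (1:ℝ)/3 :=
            Finset.sum_le_sum (fun i _ => hle i)
        _ = (N:ℝ)/3 := by simp; ring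
    unfold Phi at heq
    have h7 : (N:ℝ) < 7 := by linarith
    exact_mod_cast Nat.lt_succ_iff.mp (by exact_mod_cast h7)
  interval_cases N
  · -- N = 3
    simp only [Phi, Fin.sum_univ_three] at heq
    obtain ⟨a, hA⟩ : ∃ a, f 0 = a := ⟨_, rfl⟩
    obtain ⟨b, hB⟩ : ∃ b, f 1 = b := ⟨_, rfl⟩
    obtain ⟨c, hC⟩ : ∃ c, f 2 = c := ⟨_, rfl⟩
    have e0 : 3 ≤ a := hA ▸ h3 0
    have h01 : a ≤ b := hA ▸ hB ▸ hmono (by decide : (0:Fin 3) ≤ 1)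
    have h12 : b ≤ c := hB ▸ hC ▸ hmono (by decide : (1:Fin 3) ≤ 2)
    rw [hA, hB, hC] at heq
    suffices key : a = 3 ∧ b = 7 ∧ c = 43 by
      refine ⟨rfl, fun i => ?_⟩
      fin_cases i <;> simp [hA, hB, hC, key.1, key.2.1, key.2.2]
    have hA0 : (0:ℝ) < a := by
      have : (3:ℝ) ≤ a := by exact_mod_cast e0
      linarith
    have hB0 : (0:ℝ) < b := by
      have : (a:ℝ) ≤ b := by exact_mod_cast h01
      linarith
    have hC0 : (0:ℝ) < c := by
      have : (b:ℝ) ≤ c := by exact_mod_cast h12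
      linarith
    have hsum : 1/(a:ℝ) + 1/b + 1/c = 902/1806 := by
      push_cast at heq; linarith
    have h1a : (1:ℝ)/b ≤ 1/a := one_div_le_one_div_of_le hA0 (by exact_mod_cast h01)
    have h1b : (1:ℝ)/c ≤ 1/b := one_div_le_one_div_of_le hB0 (by exact_mod_cast h12)
    have h13 : (1:ℝ)/a ≤ 1/3 :=
      one_div_le_one_div_of_le (by norm_num) (by exact_mod_cast e0)
    have hA6 : a ≤ 6 := by
      have hk : (902:ℝ)/1806 ≤ 3/a := by
        have h3a : (3:ℝ)/a = 1/a+1/a+1/a := by ring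
        linarith
      have := div_bound 902 1806 3 a (by omega) (by norm_num) hk
      omega
    have hB12 : b ≤ 12 := by
      have hk : (300:ℝ)/1806 ≤ 2/b := by
        have h2b : (2:ℝ)/b = 1/b+1/b := by ring
        linarith
      have := div_bound 300 1806 2 b (by omega) (by norm_num) hk
      omega
    have hCne : (c:ℝ) ≠ 0 := ne_of_gt hC0
    clear heq hle h13 h1a h1b hA hB hC hmono h3
    interval_cases a <;> interval_cases b <;>
      (field_simp at hsum; norm_cast at hsum; omega)
  · -- N = 4 : impossible
    exfalso
    simp only [Phi, Fin.sum_univ_four] at heq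
    obtain ⟨a, hA⟩ : ∃ a, f 0 = a := ⟨_, rfl⟩
    obtain ⟨b, hB⟩ : ∃ b, f 1 = b := ⟨_, rfl⟩
    obtain ⟨c, hC⟩ : ∃ c, f 2 = c := ⟨_, rfl⟩
    obtain ⟨d, hD⟩ : ∃ d, f 3 = d := ⟨_, rfl⟩
    have e0 : 3 ≤ a := hA ▸ h3 0
    have h01 : a ≤ b := hA ▸ hB ▸ hmono (by decide : (0:Fin 4) ≤ 1)
    have h12 : b ≤ c := hB ▸ hC ▸ hmono (by decide : (1:Fin 4) ≤ 2)
    have h23 : c ≤ d := hC ▸ hD ▸ hmono (by decide : (2:Fin 4) ≤ 3)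
    rw [hA, hB, hC, hD] at heq
    have hA0 : (0:ℝ) < a := by
      have : (3:ℝ) ≤ a := by exact_mod_cast e0
      linarith
    have hB0 : (0:ℝ) < b := by
      have : (a:ℝ) ≤ b := by exact_mod_cast h01
      linarith
    have hC0 : (0:ℝ) < c := by
      have : (b:ℝ) ≤ c := by exact_mod_cast h12
      linarith
    have hD0 : (0:ℝ) < d := by
      have : (c:ℝ) ≤ d := by exact_mod_cast h23
      linarith
    have hsum : 1/(a:ℝ) + 1/b + 1/c + 1/d = 1805/1806 := by
      push_cast at heq; linarith
    have h1a : (1:ℝ)/b ≤ 1/a := one_div_le_one_div_of_le hA0 (by exact_mod_cast h01)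
    have h1b : (1:ℝ)/c ≤ 1/b := one_div_le_one_div_of_le hB0 (by exact_mod_cast h12)
    have h1c : (1:ℝ)/d ≤ 1/c := one_div_le_one_div_of_le hC0 (by exact_mod_cast h23)
    have h13 : (1:ℝ)/a ≤ 1/3 :=
      one_div_le_one_div_of_le (by norm_num) (by exact_mod_cast e0)
    have hA4 : a ≤ 4 := by
      have hk : (1805:ℝ)/1806 ≤ 4/a := by
        have : (4:ℝ)/a = 1/a+1/a+1/a+1/a := by ring
        linarith
      have := div_bound 1805 1806 4 a (by omega) (by norm_num) hk
      omega
    have hB4 : b ≤ 4 := by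
      have hk : (1203:ℝ)/1806 ≤ 3/b := by
        have : (3:ℝ)/b = 1/b+1/b+1/b := by ring
        linarith
      have := div_bound 1203 1806 3 b (by omega) (by norm_num) hk
      omega
    have hC6 : c ≤ 6 := by
      have hk : (601:ℝ)/1806 ≤ 2/c := by
        have : (2:ℝ)/c = 1/c+1/c := by ring
        linarith
      have := div_bound 601 1806 2 c (by omega) (by norm_num) hk
      omega
    have hDne : (d:ℝ) ≠ 0 := ne_of_gt hD0
    clear heq hle h13 h1a h1b h1c hA hB hC hD hmono h3
    interval_cases a <;> interval_cases b <;> interval_cases c <;>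
      (field_simp at hsum; norm_cast at hsum; omega)
  · -- N = 5 : impossible
    exfalso
    simp only [Phi, Fin.sum_univ_five] at heq
    obtain ⟨a, hA⟩ : ∃ a, f 0 = a := ⟨_, rfl⟩
    obtain ⟨b, hB⟩ : ∃ b, f 1 = b := ⟨_, rfl⟩
    obtain ⟨c, hC⟩ : ∃ c, f 2 = c := ⟨_, rfl⟩
    obtain ⟨d, hD⟩ : ∃ d, f 3 = d := ⟨_, rfl⟩
    obtain ⟨e, hE⟩ : ∃ e, f 4 = e := ⟨_, rfl⟩
    have e0 : 3 ≤ a := hA ▸ h3 0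
    have h01 : a ≤ b := hA ▸ hB ▸ hmono (by decide : (0:Fin 5) ≤ 1)
    have h12 : b ≤ c := hB ▸ hC ▸ hmono (by decide : (1:Fin 5) ≤ 2)
    have h23 : c ≤ d := hC ▸ hD ▸ hmono (by decide : (2:Fin 5) ≤ 3)
    have h34 : d ≤ e := hD ▸ hE ▸ hmono (by decide : (3:Fin 5) ≤ 4)
    rw [hA, hB, hC, hD, hE] at heq
    have hA0 : (0:ℝ) < a := by
      have : (3:ℝ) ≤ a := by exact_mod_cast e0
      linarith
    have hB0 : (0:ℝ) < b := by
      have : (a:ℝ) ≤ b := by exact_mod_cast h01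
      linarith
    have hC0 : (0:ℝ) < c := by
      have : (b:ℝ) ≤ c := by exact_mod_cast h12
      linarith
    have hD0 : (0:ℝ) < d := by
      have : (c:ℝ) ≤ d := by exact_mod_cast h23
      linarith
    have hE0 : (0:ℝ) < e := by
      have : (d:ℝ) ≤ e := by exact_mod_cast h34
      linarith
    have hsum : 1/(a:ℝ) + 1/b + 1/c + 1/d + 1/e = 2708/1806 := by
      push_cast at heq; linarith
    have h1a : (1:ℝ)/b ≤ 1/a := one_div_le_one_div_of_le hA0 (by exact_mod_cast h01)
    have h1b : (1:ℝ)/c ≤ 1/b := one_div_le_one_div_of_le hB0 (by exact_mod_cast h12)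
    have h1c : (1:ℝ)/d ≤ 1/c := one_div_le_one_div_of_le hC0 (by exact_mod_cast h23)
    have h1d : (1:ℝ)/e ≤ 1/d := one_div_le_one_div_of_le hD0 (by exact_mod_cast h34)
    have h13 : (1:ℝ)/a ≤ 1/3 :=
      one_div_le_one_div_of_le (by norm_num) (by exact_mod_cast e0)
    have hA3 : a ≤ 3 := by
      have hk : (2708:ℝ)/1806 ≤ 5/a := by
        have : (5:ℝ)/a = 1/a+1/a+1/a+1/a+1/a := by ring
        linarith
      have := div_bound 2708 1806 5 a (by omega) (by norm_num) hk
      omega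
    have hB3 : b ≤ 3 := by
      have hk : (2106:ℝ)/1806 ≤ 4/b := by
        have : (4:ℝ)/b = 1/b+1/b+1/b+1/b := by ring
        linarith
      have := div_bound 2106 1806 4 b (by omega) (by norm_num) hk
      omega
    have hC3 : c ≤ 3 := by
      have hk : (1504:ℝ)/1806 ≤ 3/c := by
        have : (3:ℝ)/c = 1/c+1/c+1/c := by ring
        linarith
      have := div_bound 1504 1806 3 c (by omega) (by norm_num) hk
      omega
    have hD4 : d ≤ 4 := by
      have hk : (902:ℝ)/1806 ≤ 2/d := by
        have : (2:ℝ)/d = 1/d+1/d := by ring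
        linarith
      have := div_bound 902 1806 2 d (by omega) (by norm_num) hk
      omega
    have hEne : (e:ℝ) ≠ 0 := ne_of_gt hE0
    clear heq hle h13 h1a h1b h1c h1d hA hB hC hD hE hmono h3
    interval_cases a <;> interval_cases b <;> interval_cases c <;> interval_cases d <;>
      (field_simp at hsum; norm_cast at hsum; omega)
  · -- N = 6 : impossible
    exfalso
    simp only [Phi, Fin.sum_univ_six] at heq
    obtain ⟨a, hA⟩ : ∃ a, f 0 = a := ⟨_, rfl⟩
    obtain ⟨b, hB⟩ : ∃ b, f 1 = b := ⟨_, rfl⟩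
    obtain ⟨c, hC⟩ : ∃ c, f 2 = c := ⟨_, rfl⟩
    obtain ⟨d, hD⟩ : ∃ d, f 3 = d := ⟨_, rfl⟩
    obtain ⟨e, hE⟩ : ∃ e, f 4 = e := ⟨_, rfl⟩
    obtain ⟨g, hG⟩ : ∃ g, f 5 = g := ⟨_, rfl⟩
    have e0 : 3 ≤ a := hA ▸ h3 0
    have h01 : a ≤ b := hA ▸ hB ▸ hmono (by decide : (0:Fin 6) ≤ 1)
    have h12 : b ≤ c := hB ▸ hC ▸ hmono (by decide : (1:Fin 6) ≤ 2)
    have h23 : c ≤ d := hC ▸ hD ▸ hmono (by decide : (2:Fin 6) ≤ 3)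
    have h34 : d ≤ e := hD ▸ hE ▸ hmono (by decide : (3:Fin 6) ≤ 4)
    have h45 : e ≤ g := hE ▸ hG ▸ hmono (by decide : (4:Fin 6) ≤ 5)
    rw [hA, hB, hC, hD, hE, hG] at heq
    have hA0 : (0:ℝ) < a := by
      have : (3:ℝ) ≤ a := by exact_mod_cast e0
      linarith
    have hB0 : (0:ℝ) < b := by
      have : (a:ℝ) ≤ b := by exact_mod_cast h01
      linarith
    have hC0 : (0:ℝ) < c := by
      have : (b:ℝ) ≤ c := by exact_mod_cast h12
      linarith
    have hD0 : (0:ℝ) < d := by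
      have : (c:ℝ) ≤ d := by exact_mod_cast h23
      linarith
    have hE0 : (0:ℝ) < e := by
      have : (d:ℝ) ≤ e := by exact_mod_cast h34
      linarith
    have hG0 : (0:ℝ) < g := by
      have : (e:ℝ) ≤ g := by exact_mod_cast h45
      linarith
    have hsum : 1/(a:ℝ) + 1/b + 1/c + 1/d + 1/e + 1/g = 3611/1806 := by
      push_cast at heq; linarith
    have h1a : (1:ℝ)/b ≤ 1/a := one_div_le_one_div_of_le hA0 (by exact_mod_cast h01)
    have h1b : (1:ℝ)/c ≤ 1/b := one_div_le_one_div_of_le hB0 (by exact_mod_cast h12)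
    have h1c : (1:ℝ)/d ≤ 1/c := one_div_le_one_div_of_le hC0 (by exact_mod_cast h23)
    have h1d : (1:ℝ)/e ≤ 1/d := one_div_le_one_div_of_le hD0 (by exact_mod_cast h34)
    have h1e : (1:ℝ)/g ≤ 1/e := one_div_le_one_div_of_le hE0 (by exact_mod_cast h45)
    have h13 : (1:ℝ)/a ≤ 1/3 :=
      one_div_le_one_div_of_le (by norm_num) (by exact_mod_cast e0)
    have hA3 : a ≤ 3 := by
      have hk : (3611:ℝ)/1806 ≤ 6/a := by
        have : (6:ℝ)/a = 1/a+1/a+1/a+1/a+1/a+1/a := by ring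
        linarith
      have := div_bound 3611 1806 6 a (by omega) (by norm_num) hk
      omega
    have hB3 : b ≤ 3 := by
      have hk : (3009:ℝ)/1806 ≤ 5/b := by
        have : (5:ℝ)/b = 1/b+1/b+1/b+1/b+1/b := by ring
        linarith
      have := div_bound 3009 1806 5 b (by omega) (by norm_num) hk
      omega
    have hC3 : c ≤ 3 := by
      have hk : (2407:ℝ)/1806 ≤ 4/c := by
        have : (4:ℝ)/c = 1/c+1/c+1/c+1/c := by ring
        linarith
      have := div_bound 2407 1806 4 c (by omega) (by norm_num) hk
      omega
    have hD3 : d ≤ 3 := by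
      have hk : (1805:ℝ)/1806 ≤ 3/d := by
        have : (3:ℝ)/d = 1/d+1/d+1/d := by ring
        linarith
      have := div_bound 1805 1806 3 d (by omega) (by norm_num) hk
      omega
    have hE3 : e ≤ 3 := by
      have hk : (1203:ℝ)/1806 ≤ 2/e := by
        have : (2:ℝ)/e = 1/e+1/e := by ring
        linarith
      have := div_bound 1203 1806 2 e (by omega) (by norm_num) hk
      omega
    have hG3 : g ≤ 3 := by
      have hk : (601:ℝ)/1806 ≤ 1/g := by linarith
      have := div_bound 601 1806 1 g (by omega) (by norm_num) (by exact_mod_cast hk)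
      omega
    have ha : a = 3 := le_antisymm hA3 e0
    have hb : b = 3 := by omega
    have hc : c = 3 := by omega
    have hd : d = 3 := by omega
    have he : e = 3 := by omega
    have hg : g = 3 := by omega
    rw [ha, hb, hc, hd, he, hg] at hsum
    norm_num at hsum
end

section
/- If p = (f_1,...,f_N) is a nondecreasing sequence of integers with f_i ≥ 3 and Φ(p) = 1 - N/2 + Σ 1/f_i < 0, then there is a unique a > 0 with K_a(p) = 0; moreover K_a(p) ≤ 0 iff a ≤ this unique critical value a_c(p). -/
open Real

/-- Angle defect `K_a(f₁,…,f_N) = 2π - Σᵢ 2·arcsin(cos(π/fᵢ)/cosh(a/2))`. -/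
noncomputable def Kdef (N : ℕ) (f : Fin N → ℕ) (a : ℝ) : ℝ :=
  2 * π - ∑ i, 2 * Real.arcsin (Real.cos (π / f i) / Real.cosh (a / 2))

/-- If `Φ(p) < 0` then there is a unique critical side length `a_c > 0` with
`K_{a_c}(p) = 0`, and for `a > 0` one has `K_a(p) ≤ 0` iff `a ≤ a_c`. -/
theorem stmt5 (N : ℕ) (f : Fin N → ℕ) (hmono : Monotone f) (h3 : ∀ i, 3 ≤ f i)
    (hneg : Phi N f < 0) :
    ∃ ac : ℝ, 0 < ac ∧ Kdef N f ac = 0 ∧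
      (∀ a : ℝ, 0 < a → Kdef N f a = 0 → a = ac) ∧
      (∀ a : ℝ, 0 < a → (Kdef N f a ≤ 0 ↔ a ≤ ac)) := by
  -- N ≥ 3
  have hN3 : 3 ≤ N := by
    by_contra h
    push_neg at h
    have hsum : (0:ℝ) ≤ ∑ i, (1:ℝ) / (f i) :=
      Finset.sum_nonneg fun i _ => by positivity
    have : (N:ℝ) ≤ 2 := by exact_mod_cast Nat.lt_succ_iff.mp h
    have : (0:ℝ) ≤ Phi N f := by
      unfold Phi; nlinarith
    linarith
  have hNpos : 0 < N := by omega
  have hne : (Finset.univ : Finset (Fin N)).Nonempty := by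
    have : Nonempty (Fin N) := Fin.pos_iff_nonempty.mp hNpos
    exact Finset.univ_nonempty
  have hfpos : ∀ i, (0:ℝ) < f i := fun i => by
    have := h3 i; positivity
  have hfrac_lt : ∀ i, π / f i ≤ π / 3 := fun i => by
    apply div_le_div_of_nonneg_left pi_pos.le (by norm_num)
    exact_mod_cast h3 i
  have hcospos : ∀ i, 0 < Real.cos (π / f i) := fun i => by
    apply Real.cos_pos_of_mem_Ioo
    constructor
    · have : 0 < π / f i := div_pos pi_pos (hfpos i)
      linarith [pi_pos]
    · linarith [hfrac_lt i, pi_pos]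
  have hcosle : ∀ i, Real.cos (π / f i) ≤ 1 := fun i => Real.cos_le_one _
  have hcosh1 : ∀ a : ℝ, 1 ≤ Real.cosh (a / 2) := fun a => Real.one_le_cosh _
  have hmem : ∀ a : ℝ, ∀ i, Real.cos (π / f i) / Real.cosh (a / 2) ∈ Set.Icc (-1 : ℝ) 1 := by
    intro a i
    constructor
    · have : (0:ℝ) ≤ Real.cos (π / f i) / Real.cosh (a / 2) :=
        div_nonneg (hcospos i).le (by linarith [hcosh1 a])
      linarith
    · rw [div_le_one (by linarith [hcosh1 a])]
      linarith [hcosle i, hcosh1 a]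
  -- strict monotonicity on [0, ∞)
  have hstrict : StrictMonoOn (Kdef N f) (Set.Ici 0) := by
    intro a ha b hb hab
    unfold Kdef
    have hsum : ∑ i, 2 * Real.arcsin (Real.cos (π / f i) / Real.cosh (b / 2)) <
        ∑ i, 2 * Real.arcsin (Real.cos (π / f i) / Real.cosh (a / 2)) := by
      apply Finset.sum_lt_sum_of_nonempty hne
      intro i _
      have hch : Real.cosh (a / 2) < Real.cosh (b / 2) := by
        rw [Real.cosh_lt_cosh]
        rw [abs_of_nonneg (by linarith [Set.mem_Ici.mp ha]),
          abs_of_nonneg (by linarith [Set.mem_Ici.mp ha, hab.le])]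
        linarith
      have hdiv : Real.cos (π / f i) / Real.cosh (b / 2) <
          Real.cos (π / f i) / Real.cosh (a / 2) :=
        div_lt_div_of_pos_left (hcospos i) (by linarith [hcosh1 a]) hch
      have := Real.strictMonoOn_arcsin (hmem b i) (hmem a i) hdiv
      linarith
    linarith
  -- continuity
  have hcont : Continuous (Kdef N f) := by
    unfold Kdef
    apply Continuous.sub continuous_const
    apply continuous_finset_sum
    intro i _
    apply Continuous.mul continuous_const
    apply Real.continuous_arcsin.comp
    exact continuous_const.div (Real.continuous_cosh.comp (continuous_id.div_const 2))
      (fun x => by positivity)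
  -- value at 0
  have hK0 : Kdef N f 0 = 2 * π * Phi N f := by
    unfold Kdef Phi
    have : ∀ i : Fin N, Real.arcsin (Real.cos (π / f i) / Real.cosh (0 / 2)) =
        π / 2 - π / f i := by
      intro i
      rw [show (0:ℝ)/2 = 0 by norm_num, Real.cosh_zero, div_one,
        ← Real.sin_pi_div_two_sub, Real.arcsin_sin]
      · have : 0 < π / f i := div_pos pi_pos (hfpos i)
        have : π / f i ≤ π := by linarith [hfrac_lt i, pi_pos]
        linarith
      · have : 0 < π / f i := div_pos pi_pos (hfpos i)
        linarith
    simp only [this]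
    have h2 : ∀ x : Fin N, 2 * (π / 2 - π / (f x : ℝ)) = π - 2 * π * (1 / (f x : ℝ)) :=
      fun x => by ring
    simp only [h2]
    rw [Finset.sum_sub_distrib, Finset.sum_const, ← Finset.mul_sum, Finset.card_univ,
      Fintype.card_fin, nsmul_eq_mul]
    ring
  have hK0neg : Kdef N f 0 < 0 := by
    rw [hK0]
    have := pi_pos
    nlinarith
  -- a point where K > 0
  have hsinN : 0 < Real.sin (π / N) := by
    apply Real.sin_pos_of_pos_of_lt_pi
    · exact div_pos pi_pos (by exact_mod_cast hNpos)
    · have h1 : (1:ℝ) < N := by exact_mod_cast (by omega : 1 < N)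
      calc π / N < π / 1 := div_lt_div_of_pos_left pi_pos one_pos h1
        _ = π := div_one π
  set c := Real.sin (π / N) with hc
  set A := 4 / c with hA
  have hApos : 0 < A := by positivity
  have hcoshA : 1 / c < Real.cosh (A / 2) := by
    have h1 : A / 2 = 2 / c := by rw [hA]; ring
    have h2 : Real.exp (2 / c) ≤ 2 * Real.cosh (2 / c) := by
      rw [Real.cosh_eq]
      have := Real.exp_pos (-(2/c))
      linarith
    have h3 : 1 + 2 / c ≤ Real.exp (2 / c) := by
      linarith [Real.add_one_le_exp (2 / c)]
    have hc0 : 0 < c := hsinN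
    have h5 : (1 + 2 / c) / 2 ≤ Real.cosh (2 / c) := by linarith
    have h6 : ((1 + 2 / c) / 2) * c ≤ Real.cosh (2 / c) * c :=
      mul_le_mul_of_nonneg_right h5 hc0.le
    have h7 : ((1 + 2 / c) / 2) * c = (c + 2) / 2 := by field_simp
    rw [h1, div_lt_iff₀ hc0]
    linarith
  have hKA : 0 < Kdef N f A := by
    unfold Kdef
    have hsum : ∑ i, 2 * Real.arcsin (Real.cos (π / f i) / Real.cosh (A / 2)) <
        ∑ _i : Fin N, 2 * (π / N) := by
      apply Finset.sum_lt_sum_of_nonempty hne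
      intro i _
      have hfr : Real.cos (π / f i) / Real.cosh (A / 2) < c := by
        have hch : 0 < Real.cosh (A / 2) := by linarith [hcosh1 A]
        rw [div_lt_iff₀ hch]
        have : 1 < c * Real.cosh (A / 2) := by
          rw [← div_lt_iff₀' hsinN]
          exact hcoshA
        linarith [hcosle i]
      have hcIcc : c ∈ Set.Icc (-1:ℝ) 1 := ⟨by linarith [Real.neg_one_le_sin (π / N)],
        Real.sin_le_one _⟩
      have harc : Real.arcsin (Real.cos (π / f i) / Real.cosh (A / 2)) <
          Real.arcsin c := Real.strictMonoOn_arcsin (hmem A i) hcIcc hfr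
      have hNc : Real.arcsin c = π / N := by
        rw [hc, Real.arcsin_sin]
        · have : 0 < π / N := div_pos pi_pos (by exact_mod_cast hNpos)
          linarith [pi_pos]
        · have hN2 : (2:ℝ) ≤ N := by exact_mod_cast (by omega : 2 ≤ N)
          exact div_le_div_of_nonneg_left pi_pos.le (by norm_num) hN2
      rw [hNc] at harc
      linarith
    have : ∑ _i : Fin N, 2 * (π / N) = 2 * π := by
      rw [Finset.sum_const, Finset.card_univ, Fintype.card_fin, nsmul_eq_mul]
      have hN0 : (N:ℝ) ≠ 0 := by positivity
      field_simp
    linarith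
  -- IVT
  have hK0A : Kdef N f 0 < 0 ∧ 0 < Kdef N f A := ⟨hK0neg, hKA⟩
  obtain ⟨ac, hacmem, hacval⟩ : ∃ ac ∈ Set.Ioo (0:ℝ) A, Kdef N f ac = 0 := by
    have := intermediate_value_Ioo (le_of_lt hApos) (hcont.continuousOn (s := Set.Icc 0 A))
    have hmem0 : (0:ℝ) ∈ Set.Ioo (Kdef N f 0) (Kdef N f A) := ⟨hK0neg, hKA⟩
    obtain ⟨x, hx, hxval⟩ := this hmem0
    exact ⟨x, hx, hxval⟩
  refine ⟨ac, hacmem.1, hacval, ?_, ?_⟩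
  · intro a ha hKa
    exact hstrict.injOn (Set.mem_Ici.mpr ha.le) (Set.mem_Ici.mpr hacmem.1.le)
      (by rw [hKa, hacval])
  · intro a ha
    constructor
    · intro hKa
      by_contra h
      push_neg at h
      have := hstrict (Set.mem_Ici.mpr hacmem.1.le) (Set.mem_Ici.mpr ha.le) h
      rw [hacval] at this
      linarith
    · intro hle
      rcases eq_or_lt_of_le hle with heq | hlt
      · rw [heq, hacval]
      · have := hstrict (Set.mem_Ici.mpr ha.le) (Set.mem_Ici.mpr hacmem.1.le) hlt
        rw [hacval] at this
        linarith
end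

section
/- Let p = (f_1,...,f_N) and q = (g_1,...,g_M) be nondecreasing integer sequences with all entries ≥ 3, both with negative combinatorial curvature Φ < 0. If N ≤ M and f_{N-i} ≤ g_{M-i} for all 0 ≤ i ≤ N-1, then a_c(p) ≤ a_c(q), where a_c denotes the unique positive solution of K_a(·) = 0. -/
open Real

noncomputable def term (a : ℝ) (n : ℕ) : ℝ :=
  2 * Real.arcsin (Real.cos (π / n) / Real.cosh (a / 2))

lemma cos_pi_div_pos {n : ℕ} (hn : 3 ≤ n) : 0 < Real.cos (π / n) := by
  have hn' : (3:ℝ) ≤ n := by exact_mod_cast hn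
  apply Real.cos_pos_of_mem_Ioo
  constructor
  · have : (0:ℝ) < π / n := div_pos Real.pi_pos (by linarith)
    linarith [Real.pi_pos]
  · have h1 : π / n ≤ π / 3 := by gcongr
    have : π / 3 < π / 2 := by
      apply div_lt_div_of_pos_left Real.pi_pos <;> norm_num
    linarith

lemma ratio_mem {a : ℝ} {n : ℕ} (hn : 3 ≤ n) :
    Real.cos (π / n) / Real.cosh (a / 2) ∈ Set.Icc (-1 : ℝ) 1 := by
  have hc := Real.one_le_cosh (a / 2)
  have hcpos : (0:ℝ) < Real.cosh (a / 2) := by linarith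
  constructor
  · have : (0:ℝ) ≤ Real.cos (π / n) / Real.cosh (a / 2) :=
      div_nonneg (cos_pi_div_pos hn).le hcpos.le
    linarith
  · rw [div_le_one hcpos]
    exact le_trans (Real.cos_le_one _) hc

lemma term_nonneg (a : ℝ) {n : ℕ} (hn : 3 ≤ n) : 0 ≤ term a n := by
  have hc := Real.one_le_cosh (a / 2)
  have h0 : (0:ℝ) ≤ Real.cos (π / n) / Real.cosh (a / 2) :=
    div_nonneg (cos_pi_div_pos hn).le (by linarith)
  have := Real.arcsin_nonneg.mpr h0
  unfold term; linarith

lemma term_mono_n (a : ℝ) {m n : ℕ} (hm : 3 ≤ m) (hmn : m ≤ n) : term a m ≤ term a n := by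
  have hn : 3 ≤ n := le_trans hm hmn
  have hm' : (3:ℝ) ≤ m := by exact_mod_cast hm
  have hmn' : (m:ℝ) ≤ n := by exact_mod_cast hmn
  have hc := Real.one_le_cosh (a / 2)
  have hcpos : (0:ℝ) < Real.cosh (a / 2) := by linarith
  have hcos : Real.cos (π / m) ≤ Real.cos (π / n) := by
    apply Real.cos_le_cos_of_nonneg_of_le_pi
    · positivity
    · have h1 : π / m ≤ π / 3 := by gcongr
      linarith [Real.pi_pos]
    · gcongr
  have hdiv : Real.cos (π / m) / Real.cosh (a / 2) ≤ Real.cos (π / n) / Real.cosh (a / 2) := by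
    gcongr
  have := Real.monotone_arcsin hdiv
  unfold term; linarith

lemma term_strict_anti (n : ℕ) (hn : 3 ≤ n) {a b : ℝ} (ha : 0 < a) (hab : a < b) :
    term b n < term a n := by
  have hcosh : Real.cosh (a / 2) < Real.cosh (b / 2) := by
    rw [Real.cosh_lt_cosh, abs_of_pos (by linarith), abs_of_pos (by linarith)]
    linarith
  have hca := Real.one_le_cosh (a / 2)
  have hcapos : (0:ℝ) < Real.cosh (a / 2) := by linarith
  have hcospos := cos_pi_div_pos hn
  have hdiv : Real.cos (π / n) / Real.cosh (b / 2) < Real.cos (π / n) / Real.cosh (a / 2) :=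
    div_lt_div_of_pos_left hcospos hcapos hcosh
  have := Real.strictMonoOn_arcsin (ratio_mem hn) (ratio_mem hn) hdiv
  unfold term; linarith

/-- Monotonicity of the critical side length: if `p ⪯ q`
(`N ≤ M` and `f_{N-i} ≤ g_{M-i}` for `0 ≤ i ≤ N-1`), then `a_c(p) ≤ a_c(q)`. -/
theorem stmt6 (N M : ℕ) (f : Fin N → ℕ) (g : Fin M → ℕ)
    (hf : Monotone f) (hg : Monotone g) (hf3 : ∀ i, 3 ≤ f i) (hg3 : ∀ i, 3 ≤ g i)
    (hfneg : Phi N f < 0) (hgneg : Phi M g < 0)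
    (hNM : N ≤ M)
    (hdom : ∀ (i : ℕ) (hi : i < N),
      f ⟨N - 1 - i, by omega⟩ ≤ g ⟨M - 1 - i, by omega⟩)
    (ap aq : ℝ) (hap : 0 < ap) (haq : 0 < aq)
    (hKp : Kdef N f ap = 0) (hKq : Kdef M g aq = 0) :
    ap ≤ aq := by
  by_contra h
  push_neg at h
  have hN : 0 < N := by
    rcases Nat.eq_zero_or_pos N with h0 | h0
    · subst h0; simp [Phi] at hfneg; linarith
    · exact h0
  have hdom' : ∀ j : Fin N, f j ≤ g ⟨M - N + j, by omega⟩ := by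
    intro j
    have hj := j.2
    have := hdom (N - 1 - j) (by omega)
    convert this using 3 <;> omega
  set e : Fin N → Fin M := fun j => ⟨M - N + j, by omega⟩ with he
  have hinj : Function.Injective e := by
    intro i j hij
    have : M - N + (i:ℕ) = M - N + (j:ℕ) := congrArg Fin.val hij
    exact Fin.ext (by omega)
  have hsum_fg : ∑ i, term aq (f i) ≤ ∑ j, term aq (g j) := by
    calc ∑ i, term aq (f i) ≤ ∑ i, term aq (g (e i)) := by
          apply Finset.sum_le_sum
          intro i _
          exact term_mono_n aq (hf3 i) (hdom' i)
      _ = ∑ j ∈ Finset.univ.image e, term aq (g j) := by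
          rw [Finset.sum_image (fun a _ b _ hab => hinj hab)]
      _ ≤ ∑ j, term aq (g j) := by
          apply Finset.sum_le_sum_of_subset_of_nonneg (Finset.subset_univ _)
          intro j _ _
          exact term_nonneg aq (hg3 j)
  have hsum_a : ∑ i, term ap (f i) < ∑ i, term aq (f i) := by
    apply Finset.sum_lt_sum_of_nonempty
    · exact Finset.univ_nonempty_iff.mpr ⟨⟨0, hN⟩⟩
    · intro i _
      exact term_strict_anti (f i) (hf3 i) haq h
  have hKp' : ∑ i, term ap (f i) = 2 * π := by
    unfold Kdef at hKp; unfold term; linarith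
  have hKq' : ∑ j, term aq (g j) = 2 * π := by
    unfold Kdef at hKq; unfold term; linarith
  linarith
end

section
/- For integers 3 ≤ f_1 ≤ f_2 ≤ f_3 with 1/f_1 + 1/f_2 + 1/f_3 < 1/2, the critical side length satisfies cosh(a_c(f_1,f_2,f_3)/2)² = (1/2)·α where α = 8·∏_{i=1}^3 cos²(π/f_i) divided by the product of (cos(π/f_1) + cos(π/f_2) + cos(π/f_3)), (-cos(π/f_1) + cos(π/f_2) + cos(π/f_3)), (cos(π/f_1) - cos(π/f_2) + cos(π/f_3)), and (cos(π/f_1) + cos(π/f_2) - cos(π/f_3)). Equivalently, a = a_c(f_1,f_2,f_3) is the unique positive solution of Σ_{i=1}^3 2·arcsin(cos(π/f_i)/cosh(a/2)) = 2π. -/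
open Real

lemma formula_aux (c₁ c₂ c₃ t : ℝ) (p1 : 0 < c₁) (p2 : 0 < c₂) (p3 : 0 < c₃)
    (u1 : c₁ * t ≤ 1) (u2 : c₂ * t ≤ 1) (u3 : c₃ * t ≤ 1) (ht : 0 < t)
    (heq : arcsin (c₁*t) + arcsin (c₂*t) + arcsin (c₃*t) = π) :
    4*c₁^2*c₂^2*c₃^2*t^2 =
      (c₁+c₂+c₃)*(-c₁+c₂+c₃)*(c₁-c₂+c₃)*(c₁+c₂-c₃) := by
  have n1 : (0:ℝ) ≤ c₁ * t := by positivity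
  have n2 : (0:ℝ) ≤ c₂ * t := by positivity
  have n3 : (0:ℝ) ≤ c₃ * t := by positivity
  have m1 : (-1:ℝ) ≤ c₁ * t := by linarith
  have m2 : (-1:ℝ) ≤ c₂ * t := by linarith
  have m3 : (-1:ℝ) ≤ c₃ * t := by linarith
  have hθ : arcsin (c₃*t) = π - (arcsin (c₁*t) + arcsin (c₂*t)) := by linarith
  have h3 : Real.sin (arcsin (c₃*t)) = c₃*t := sin_arcsin m3 u3
  rw [hθ, Real.sin_pi_sub, Real.sin_add, Real.cos_arcsin, Real.cos_arcsin,
    sin_arcsin m1 u1, sin_arcsin m2 u2] at h3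
  set u := Real.sqrt (1 - (c₁*t)^2) with hudef
  set v := Real.sqrt (1 - (c₂*t)^2) with hvdef
  have hu : u^2 = 1 - (c₁*t)^2 := Real.sq_sqrt (by nlinarith)
  have hv : v^2 = 1 - (c₂*t)^2 := Real.sq_sqrt (by nlinarith)
  have hmid : (c₃*t)^2 - (c₁*t)^2 - (c₂*t)^2 + 2*(c₁*t)^2*(c₂*t)^2
      = 2*(c₁*t)*(c₂*t)*u*v := by
    rw [← h3]; linear_combination (c₁*t)^2*hv + (c₂*t)^2*hu
  have key : ((c₃*t)^2 - (c₁*t)^2 - (c₂*t)^2 + 2*(c₁*t)^2*(c₂*t)^2)^2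
      = 4*(c₁*t)^2*(c₂*t)^2*(1-(c₁*t)^2)*(1-(c₂*t)^2) := by
    rw [hmid]
    linear_combination (4*(c₁*t)^2*(c₂*t)^2*v^2)*hu + (4*(c₁*t)^2*(c₂*t)^2*(1-(c₁*t)^2))*hv
  have key2 : ((c₃*t)^2 - (c₁*t)^2 - (c₂*t)^2)^2 = 4*(c₁*t)^2*(c₂*t)^2*(1-(c₃*t)^2) := by
    linear_combination key
  have ht4 : t^4 ≠ 0 := by positivity
  have key3 : (c₃^2-c₁^2-c₂^2)^2 = 4*c₁^2*c₂^2*(1-c₃^2*t^2) := by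
    apply mul_left_cancel₀ ht4
    linear_combination key2
  linear_combination key3

noncomputable def Gfun (c₁ c₂ c₃ : ℝ) (a : ℝ) : ℝ :=
  2 * arcsin (c₁ / Real.cosh (a/2)) + 2 * arcsin (c₂ / Real.cosh (a/2)) +
  2 * arcsin (c₃ / Real.cosh (a/2))

lemma G_strictAnti (c₁ c₂ c₃ : ℝ) (p1 : 0 < c₁) (p2 : 0 < c₂) (p3 : 0 < c₃)
    (l1 : c₁ ≤ 1) (l2 : c₂ ≤ 1) (l3 : c₃ ≤ 1) :
    StrictAntiOn (Gfun c₁ c₂ c₃) (Set.Ici 0) := by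
  intro a ha b hb hab
  simp only [Set.mem_Ici] at ha hb
  have hca : (1:ℝ) ≤ Real.cosh (a/2) := Real.one_le_cosh _
  have hcb : (1:ℝ) ≤ Real.cosh (b/2) := Real.one_le_cosh _
  have hlt : Real.cosh (a/2) < Real.cosh (b/2) := by
    rw [Real.cosh_lt_cosh]
    rw [abs_of_nonneg (by linarith), abs_of_nonneg (by linarith)]
    linarith
  have harc : ∀ c : ℝ, 0 < c → c ≤ 1 →
      arcsin (c / Real.cosh (b/2)) < arcsin (c / Real.cosh (a/2)) := by
    intro c hc hc1
    apply Real.strictMonoOn_arcsin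
    · constructor
      · have : 0 ≤ c / Real.cosh (b/2) := by positivity
        linarith
      · rw [div_le_one (by linarith)]; linarith
    · constructor
      · have : 0 ≤ c / Real.cosh (a/2) := by positivity
        linarith
      · rw [div_le_one (by linarith)]; linarith
    · exact div_lt_div_of_pos_left hc (by linarith) hlt
  have h1 := harc c₁ p1 l1
  have h2 := harc c₂ p2 l2
  have h3 := harc c₃ p3 l3
  unfold Gfun
  linarith

lemma G_cont (c₁ c₂ c₃ : ℝ) : Continuous (Gfun c₁ c₂ c₃) := by
  unfold Gfun
  have h : ∀ c : ℝ, Continuous (fun a : ℝ => arcsin (c / Real.cosh (a/2))) := by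
    intro c
    exact Real.continuous_arcsin.comp
      (continuous_const.div (Real.continuous_cosh.comp (by continuity))
        (fun a => (Real.cosh_pos (x := a/2)).ne'))
  exact (((continuous_const.mul (h c₁)).add (continuous_const.mul (h c₂))).add
    (continuous_const.mul (h c₃)))

lemma key_aux (c₁ c₂ c₃ : ℝ) (h1 : 1/2 ≤ c₁) (h2 : 1/2 ≤ c₂) (h3 : 1/2 ≤ c₃)
    (l1 : c₁ < 1) (l2 : c₂ < 1) (l3 : c₃ < 1)
    (hsum : π < arcsin c₁ + arcsin c₂ + arcsin c₃) :
    (∃! a : ℝ, 0 < a ∧ Gfun c₁ c₂ c₃ a = 2*π) ∧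
    ∀ a : ℝ, 0 < a → Gfun c₁ c₂ c₃ a = 2*π →
      Real.cosh (a/2)^2 =
        (8*(c₁^2*c₂^2*c₃^2) / ((c₁+c₂+c₃)*(-c₁+c₂+c₃)*(c₁-c₂+c₃)*(c₁+c₂-c₃)))/2 := by
  have p1 : (0:ℝ) < c₁ := by linarith
  have p2 : (0:ℝ) < c₂ := by linarith
  have p3 : (0:ℝ) < c₃ := by linarith
  have hanti := G_strictAnti c₁ c₂ c₃ p1 p2 p3 l1.le l2.le l3.le
  constructor
  · have hG0 : 2*π < Gfun c₁ c₂ c₃ 0 := by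
      unfold Gfun
      norm_num [Real.cosh_zero]
      linarith
    have hG4 : Gfun c₁ c₂ c₃ 4 < 2*π := by
      have he : (2:ℝ) < Real.exp 1 := by
        have := Real.exp_one_gt_d9; linarith
      have hc2 : (2:ℝ) < Real.cosh 2 := by
        rw [Real.cosh_eq]
        have h4 : (4:ℝ) < Real.exp 2 := by
          have : Real.exp 2 = Real.exp 1 * Real.exp 1 := by
            rw [← Real.exp_add]; norm_num
          nlinarith
        have : (0:ℝ) < Real.exp (-2) := Real.exp_pos _
        linarith
      have harc : ∀ c : ℝ, 0 < c → c < 1 → arcsin (c / Real.cosh 2) < π/3 := by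
        intro c hc hc1
        have hd : c / Real.cosh 2 < 1/2 := by
          rw [div_lt_iff₀ (by linarith)]; nlinarith
        have hsin : Real.sin (π/3) = Real.sqrt 3 / 2 := Real.sin_pi_div_three
        have h3 : (1:ℝ) ≤ Real.sqrt 3 := by
          rw [show (1:ℝ) = Real.sqrt 1 by simp]
          exact Real.sqrt_le_sqrt (by norm_num)
        have : arcsin (c / Real.cosh 2) < arcsin (Real.sin (π/3)) := by
          apply Real.strictMonoOn_arcsin
          · constructor
            · have : 0 ≤ c / Real.cosh 2 := by positivity
              linarith
            · linarith
          · constructor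
            · rw [hsin]; linarith
            · exact Real.sin_le_one _
          · rw [hsin]; linarith
        rwa [Real.arcsin_sin (by linarith [Real.pi_pos]) (by linarith [Real.pi_pos])] at this
      have e1 := harc c₁ p1 l1
      have e2 := harc c₂ p2 l2
      have e3 := harc c₃ p3 l3
      unfold Gfun
      norm_num
      linarith
    obtain ⟨a₀, ha₀mem, ha₀⟩ := intermediate_value_Icc' (by norm_num : (0:ℝ) ≤ 4)
      ((G_cont c₁ c₂ c₃).continuousOn) ⟨hG4.le, hG0.le⟩
    have ha₀pos : 0 < a₀ := by
      rcases lt_or_eq_of_le ha₀mem.1 with h | h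
      · exact h
      · exfalso; rw [← h] at ha₀; linarith
    refine ⟨a₀, ⟨ha₀pos, ha₀⟩, ?_⟩
    rintro b ⟨hbpos, hb⟩
    exact hanti.injOn (Set.mem_Ici.2 hbpos.le) (Set.mem_Ici.2 ha₀pos.le) (by rw [hb, ha₀])
  · intro a ha heq
    unfold Gfun at heq
    set ch := Real.cosh (a/2) with hchdef
    have hch1 : (1:ℝ) ≤ ch := Real.one_le_cosh _
    have hch : (0:ℝ) < ch := by linarith
    have hmul : ∀ c : ℝ, c / ch = c * ch⁻¹ := fun c => div_eq_mul_inv c ch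
    have ht : (0:ℝ) < ch⁻¹ := by positivity
    have hub : ∀ c : ℝ, 0 < c → c < 1 → c * ch⁻¹ ≤ 1 := by
      intro c hc hc1
      rw [← div_eq_mul_inv, div_le_one hch]; linarith
    have heq' : arcsin (c₁ * ch⁻¹) + arcsin (c₂ * ch⁻¹) + arcsin (c₃ * ch⁻¹) = π := by
      rw [← hmul, ← hmul, ← hmul]; linarith
    have hf := formula_aux c₁ c₂ c₃ ch⁻¹ p1 p2 p3 (hub _ p1 l1) (hub _ p2 l2) (hub _ p3 l3) ht heq'
    have hD : (0:ℝ) < (c₁+c₂+c₃)*(-c₁+c₂+c₃)*(c₁-c₂+c₃)*(c₁+c₂-c₃) := by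
      have : (0:ℝ) < -c₁+c₂+c₃ := by linarith
      have : (0:ℝ) < c₁-c₂+c₃ := by linarith
      have : (0:ℝ) < c₁+c₂-c₃ := by linarith
      have : (0:ℝ) < c₁+c₂+c₃ := by linarith
      positivity
    have hinv : ch^2 * (ch⁻¹)^2 = 1 := by field_simp
    have hch2 : ch^2 * ((c₁+c₂+c₃)*(-c₁+c₂+c₃)*(c₁-c₂+c₃)*(c₁+c₂-c₃))
        = 4*(c₁^2*c₂^2*c₃^2) := by
      linear_combination (-(ch^2))*hf + 4*(c₁^2*c₂^2*c₃^2)*hinv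
    rw [div_div, eq_div_iff (by positivity)]
    linear_combination 2*hch2

/-- Closed formula for the critical side length of a degree-3 vertex pattern
`(f₁,f₂,f₃)` with negative curvature: `a_c` is the unique positive solution of
`Σᵢ 2·arcsin(cos(π/fᵢ)/cosh(a/2)) = 2π`, and it satisfies
`cosh(a_c/2)² = α/2` with `α = 8∏cos²(π/fᵢ) / ∏(±cos(π/f₁)±cos(π/f₂)±cos(π/f₃))`
(at most one minus sign in each factor). -/
theorem stmt8 (f₁ f₂ f₃ : ℕ) (h1 : 3 ≤ f₁) (h12 : f₁ ≤ f₂) (h23 : f₂ ≤ f₃)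
    (hneg : (1 : ℝ) / f₁ + 1 / f₂ + 1 / f₃ < 1 / 2) :
    (∃! a : ℝ, 0 < a ∧
        2 * Real.arcsin (Real.cos (π / f₁) / Real.cosh (a / 2)) +
        2 * Real.arcsin (Real.cos (π / f₂) / Real.cosh (a / 2)) +
        2 * Real.arcsin (Real.cos (π / f₃) / Real.cosh (a / 2)) = 2 * π) ∧
    ∀ a : ℝ, 0 < a →
      2 * Real.arcsin (Real.cos (π / f₁) / Real.cosh (a / 2)) +
      2 * Real.arcsin (Real.cos (π / f₂) / Real.cosh (a / 2)) +
      2 * Real.arcsin (Real.cos (π / f₃) / Real.cosh (a / 2)) = 2 * π →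
      Real.cosh (a / 2) ^ 2 =
        (8 * (Real.cos (π / f₁) ^ 2 * Real.cos (π / f₂) ^ 2 * Real.cos (π / f₃) ^ 2) /
          ((Real.cos (π / f₁) + Real.cos (π / f₂) + Real.cos (π / f₃)) *
           (-Real.cos (π / f₁) + Real.cos (π / f₂) + Real.cos (π / f₃)) *
           (Real.cos (π / f₁) - Real.cos (π / f₂) + Real.cos (π / f₃)) *
           (Real.cos (π / f₁) + Real.cos (π / f₂) - Real.cos (π / f₃)))) / 2 := by
  have hπ := Real.pi_pos
  have hf2 : 3 ≤ f₂ := le_trans h1 h12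
  have hf3 : 3 ≤ f₃ := le_trans hf2 h23
  have hbase : ∀ f : ℕ, 3 ≤ f →
      (1/2 ≤ Real.cos (π / f) ∧ Real.cos (π / f) < 1) ∧
      Real.arcsin (Real.cos (π / f)) = π/2 - π/f := by
    intro f hf
    have hfR : (3:ℝ) ≤ (f:ℝ) := by exact_mod_cast hf
    have hfpos : (0:ℝ) < (f:ℝ) := by linarith
    have hdivpos : 0 < π / f := by positivity
    have hdiv3 : π / f ≤ π / 3 := by
      apply div_le_div_of_nonneg_left hπ.le (by norm_num) hfR
    have hdivπ : π / f ≤ π := by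
      calc π / f ≤ π / 3 := hdiv3
        _ ≤ π := by linarith
    refine ⟨⟨?_, ?_⟩, ?_⟩
    · have := Real.cos_le_cos_of_nonneg_of_le_pi hdivpos.le (by linarith) hdiv3
      rwa [Real.cos_pi_div_three] at this
    · have := Real.cos_lt_cos_of_nonneg_of_le_pi (le_refl (0:ℝ)) hdivπ hdivpos
      rwa [Real.cos_zero] at this
    · rw [← Real.sin_pi_div_two_sub, Real.arcsin_sin (by linarith) (by linarith)]
  obtain ⟨⟨b1, c1⟩, a1⟩ := hbase f₁ h1
  obtain ⟨⟨b2, c2⟩, a2⟩ := hbase f₂ hf2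
  obtain ⟨⟨b3, c3⟩, a3⟩ := hbase f₃ hf3
  have hsum : π < Real.arcsin (Real.cos (π / f₁)) + Real.arcsin (Real.cos (π / f₂)) +
      Real.arcsin (Real.cos (π / f₃)) := by
    rw [a1, a2, a3]
    have hm := mul_lt_mul_of_pos_left hneg hπ
    have e1 : π / (f₁:ℝ) = π * (1/f₁) := by ring
    have e2 : π / (f₂:ℝ) = π * (1/f₂) := by ring
    have e3 : π / (f₃:ℝ) = π * (1/f₃) := by ring
    rw [e1, e2, e3]
    nlinarith
  have := key_aux (Real.cos (π / f₁)) (Real.cos (π / f₂)) (Real.cos (π / f₃))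
    b1 b2 b3 c1 c2 c3 hsum
  simpa only [Gfun] using this
end
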